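/- Shifting Lemma: For any stable graph homomorphism f: I_∞ → G and any integer n, the shifted map f_n defined by f_n(i) = f(i − n) is A-homotopic to f. -/

import Mathlib

/-- A graph homomorphism in the A-homotopy sense: adjacent vertices map to
equal or adjacent vertices. -/
def IsGraphHom {V W : Type*} (G : SimpleGraph V) (H : SimpleGraph W) (f : V → W) : Prop :=
  ∀ ⦃u v : V⦄, G.Adj u v → f u = f v ∨ H.Adj (f u) (f v)

/-- The infinite path graph `I_∞` on `ℤ`. -/
def pathGraphZ : SimpleGraph ℤ where
  Adj i j := i ≠ j ∧ (j = i + 1 ∨ i = j + 1)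
  symm := ⟨fun i j h => ⟨h.1.symm, h.2.symm⟩⟩
  loopless := ⟨fun i h => h.1 rfl⟩

/-- The Cartesian (box) product `I_∞ □ I_∞` on `ℤ × ℤ`. -/
def gridGraphZ : SimpleGraph (ℤ × ℤ) where
  Adj p q := p ≠ q ∧ ((p.1 = q.1 ∧ pathGraphZ.Adj p.2 q.2) ∨ (p.2 = q.2 ∧ pathGraphZ.Adj p.1 q.1))
  symm := ⟨fun p q h =>
    ⟨h.1.symm, h.2.imp (fun hc => ⟨hc.1.symm, hc.2.symm⟩) (fun hc => ⟨hc.1.symm, hc.2.symm⟩)⟩⟩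
  loopless := ⟨fun p h => h.1 rfl⟩

/-- The Cartesian product `G □ I_∞` on `V × ℤ`. -/
def boxZ {V : Type*} (G : SimpleGraph V) : SimpleGraph (V × ℤ) where
  Adj p q := p ≠ q ∧ ((p.1 = q.1 ∧ pathGraphZ.Adj p.2 q.2) ∨ (p.2 = q.2 ∧ G.Adj p.1 q.1))
  symm := ⟨fun p q h =>
    ⟨h.1.symm, h.2.imp (fun hc => ⟨hc.1.symm, hc.2.symm⟩) (fun hc => ⟨hc.1.symm, hc.2.symm⟩)⟩⟩
  loopless := ⟨fun p h => h.1 rfl⟩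

/-- The cycle graph `C_n` on `ZMod n`. -/
def cycleGraph (n : ℕ) : SimpleGraph (ZMod n) where
  Adj a b := a ≠ b ∧ (a = b + 1 ∨ b = a + 1)
  symm := ⟨fun a b h => ⟨h.1.symm, h.2.symm⟩⟩
  loopless := ⟨fun a h => h.1 rfl⟩

/-- The one-vertex graph `*`. -/
def oneVertexGraph : SimpleGraph Unit := ⊥

/-- `f` is constant on integers `≤ m`. -/
def IsStabNegAt {V : Type*} (f : ℤ → V) (m : ℤ) : Prop := ∀ i ≤ m, f i = f m

/-- `f` is constant on integers `≥ m`. -/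
def IsStabPosAt {V : Type*} (f : ℤ → V) (m : ℤ) : Prop := ∀ i, m ≤ i → f i = f m

/-- `m` is the greatest integer below which `f` is constant: `m = m₀(f,-1)`. -/
def M0Neg {V : Type*} (f : ℤ → V) (m : ℤ) : Prop :=
  IsStabNegAt f m ∧ ∀ m', IsStabNegAt f m' → m' ≤ m

/-- `m` is the least integer above which `f` is constant: `m = m₀(f,+1)`. -/
def M0Pos {V : Type*} (f : ℤ → V) (m : ℤ) : Prop :=
  IsStabPosAt f m ∧ ∀ m', IsStabPosAt f m' → m ≤ m'

/-- A stable graph homomorphism `I_∞ → G`. -/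
def StableHomZ {V : Type*} (G : SimpleGraph V) (f : ℤ → V) : Prop :=
  IsGraphHom pathGraphZ G f ∧ (∃ m, IsStabNegAt f m) ∧ (∃ m, IsStabPosAt f m)

/-- The A-homotopy relation of Babson et al. on stable maps `I_∞ → G`:
`f` and `g` share their end values `vneg`, `vpos`, and there is a stable graph
homomorphism `H : I_∞² → G` stabilizing in the first axis to the constant end
values and to `f` (resp. `g`) in the negative (resp. positive) second direction. -/
def AHomotopicZ {V : Type*} (G : SimpleGraph V) (f g : ℤ → V) : Prop :=
  ∃ (vneg vpos : V) (H : ℤ × ℤ → V), IsGraphHom gridGraphZ G H ∧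
    (∃ m, ∀ i ≤ m, f i = vneg ∧ g i = vneg) ∧
    (∃ m, ∀ i, m ≤ i → f i = vpos ∧ g i = vpos) ∧
    (∃ m, ∀ a ≤ m, ∀ j : ℤ, H (a, j) = vneg) ∧
    (∃ m, ∀ a, m ≤ a → ∀ j : ℤ, H (a, j) = vpos) ∧
    (∃ m, ∀ j ≤ m, ∀ a : ℤ, H (a, j) = f a) ∧
    (∃ m, ∀ j, m ≤ j → ∀ a : ℤ, H (a, j) = g a)

/-- A-homotopy of graph homomorphisms `G → H` via a finite cylinder `G □ I_n`
(encoded as a homotopy on `G □ I_∞` that is constantly `f` for times `≤ 0` and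
constantly `g` for times `≥ n`). -/
def AHomotopicFin {V W : Type*} (G : SimpleGraph V) (H : SimpleGraph W) (f g : V → W) : Prop :=
  ∃ (n : ℕ) (Φ : V × ℤ → W), IsGraphHom (boxZ G) H Φ ∧
    (∀ v : V, ∀ i ≤ (0 : ℤ), Φ (v, i) = f v) ∧
    (∀ v : V, ∀ i : ℤ, (n : ℤ) ≤ i → Φ (v, i) = g v)

/-- Based A-homotopy: as `AHomotopicFin`, additionally fixing the base vertex
`v0 ↦ w0` at all times. -/
def AHomotopicBased {V W : Type*} (G : SimpleGraph V) (H : SimpleGraph W)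
    (v0 : V) (w0 : W) (f g : V → W) : Prop :=
  ∃ (n : ℕ) (Φ : V × ℤ → W), IsGraphHom (boxZ G) H Φ ∧
    (∀ v : V, ∀ i ≤ (0 : ℤ), Φ (v, i) = f v) ∧
    (∀ v : V, ∀ i : ℤ, (n : ℤ) ≤ i → Φ (v, i) = g v) ∧
    (∀ i : ℤ, Φ (v0, i) = w0)

/-- Concatenation `f · g`, where `mf = m₀(f,-1)` and `mg = m₀(g,+1)`. -/
def concatZ {V : Type*} (f g : ℤ → V) (mf mg : ℤ) : ℤ → V :=
  fun a => if 0 ≤ a then f (a + mf) else g (a + mg)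

/-- The closed neighborhood `N[v]`. -/
def nbhd {V : Type*} (G : SimpleGraph V) (v : V) : Set V := {u | u = v ∨ G.Adj u v}

/-- A covering graph map: a surjective local isomorphism. -/
def IsCoveringMap' {V W : Type*} (Gt : SimpleGraph V) (G : SimpleGraph W) (p : V → W) : Prop :=
  IsGraphHom Gt G p ∧ Function.Surjective p ∧
    ∀ w : V, Set.BijOn p (nbhd Gt w) (nbhd G (p w))

/-- A based loop in `B₁(G, x₀)`: a graph homomorphism `I_∞ → G` equal to `x₀`
outside a finite region. -/
def IsLoopAt {V : Type*} (G : SimpleGraph V) (x0 : V) (γ : ℤ → V) : Prop :=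
  IsGraphHom pathGraphZ G γ ∧ ∃ a b : ℤ, ∀ i : ℤ, (i < a ∨ b < i) → γ i = x0

/-- The 5-cycle. -/
def C5 : SimpleGraph (ZMod 5) := cycleGraph 5

/-- The covering map `p₅ : I_∞ → C₅`, reduction mod 5. -/
def p5 : ℤ → ZMod 5 := fun i => (i : ZMod 5)

/-- The standard loop `γ_n` winding `n` times around `C₅`. -/
def gammaC5 (n : ℤ) : ℤ → ZMod 5 := fun i =>
  if 0 ≤ n then (if i ≤ 0 then 0 else if i ≤ 5 * n then (i : ZMod 5) else 0)
  else (if i ≤ 0 then 0 else if i ≤ -(5 * n) then ((-i : ℤ) : ZMod 5) else 0)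

/-- The standard lift `γ̃_n : I_∞ → I_∞` of `γ_n`, starting at `0` and ending at `5n`. -/
def gammaLift (n : ℤ) : ℤ → ℤ := fun i =>
  if i ≤ 0 then 0 else if i ≤ 5 * |n| then (if 0 ≤ n then i else -i) else 5 * n

/-!
The homotopy is `H (a, j) = f (a - c j)`, where the shift `c j` walks from `0` to `n`
one unit per time step. Since `c` moves by at most one per step, `(a, j) ↦ a - c j` is a
graph map `I_∞ □ I_∞ → I_∞`, and composing with `f` gives a graph map to `G`. As `c` stays
between `0` and `n`, the rows of `H` stabilize to the end values of `f`.
-/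

lemma IsGraphHom.comp {U V W : Type*} {G : SimpleGraph U} {H : SimpleGraph V}
    {K : SimpleGraph W} {g : V → W} {f : U → V} (hg : IsGraphHom H K g)
    (hf : IsGraphHom G H f) : IsGraphHom G K (g ∘ f) := by
  intro u v huv
  rcases hf huv with h | h
  · exact Or.inl (congrArg g h)
  · exact hg h

lemma pathGraphZ_adj_iff {i j : ℤ} : pathGraphZ.Adj i j ↔ j = i + 1 ∨ i = j + 1 :=
  ⟨And.right, fun h => ⟨by omega, h⟩⟩

lemma isGraphHom_gridGraphZ_sub {c : ℤ → ℤ} (hc : IsGraphHom pathGraphZ pathGraphZ c) :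
    IsGraphHom gridGraphZ pathGraphZ (fun p => p.1 - c p.2) := by
  rintro ⟨a, j⟩ ⟨b, k⟩ ⟨-, ⟨rfl, hjk⟩ | ⟨rfl, hab⟩⟩
  · have := hc hjk
    simp only [pathGraphZ_adj_iff] at this ⊢
    omega
  · simp only [pathGraphZ_adj_iff] at hab ⊢
    omega

def shiftAmount (n j : ℤ) : ℤ :=
  if 0 ≤ n then max 0 (min j n) else min 0 (max (-j) n)

lemma isGraphHom_shiftAmount (n : ℤ) : IsGraphHom pathGraphZ pathGraphZ (shiftAmount n) := by
  intro i j hij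
  simp only [pathGraphZ_adj_iff, shiftAmount] at hij ⊢
  split <;> omega

lemma shiftAmount_of_nonpos {n j : ℤ} (hj : j ≤ 0) : shiftAmount n j = 0 := by
  unfold shiftAmount
  split <;> omega

lemma shiftAmount_of_abs_le {n j : ℤ} (hj : |n| ≤ j) : shiftAmount n j = n := by
  unfold shiftAmount
  split <;> cases abs_cases n <;> omega

lemma min_le_shiftAmount (n j : ℤ) : min 0 n ≤ shiftAmount n j := by
  unfold shiftAmount
  split <;> omega

lemma shiftAmount_le_max (n j : ℤ) : shiftAmount n j ≤ max 0 n := by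
  unfold shiftAmount
  split <;> omega

/-- Shifting Lemma: a stable graph homomorphism is A-homotopic to any of its
integer shifts. -/
theorem shifting_lemma {V : Type*} (G : SimpleGraph V) (f : ℤ → V)
    (hf : StableHomZ G f) (n : ℤ) :
    AHomotopicZ G f (fun i => f (i - n)) := by
  obtain ⟨hhom, ⟨mneg, hneg⟩, ⟨mpos, hpos⟩⟩ := hf
  refine ⟨f mneg, f mpos, fun p => f (p.1 - shiftAmount n p.2),
    hhom.comp (isGraphHom_gridGraphZ_sub (isGraphHom_shiftAmount n)),
    ⟨min mneg (mneg + n), fun i hi => ⟨hneg i (by omega), hneg (i - n) (by omega)⟩⟩,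
    ⟨max mpos (mpos + n), fun i hi => ⟨hpos i (by omega), hpos (i - n) (by omega)⟩⟩,
    ⟨mneg + min 0 n, fun a ha j => hneg (a - shiftAmount n j)
      (by have := min_le_shiftAmount n j; omega)⟩,
    ⟨mpos + max 0 n, fun a ha j => hpos (a - shiftAmount n j)
      (by have := shiftAmount_le_max n j; omega)⟩,
    ⟨0, fun j hj a => by simp only [shiftAmount_of_nonpos hj, sub_zero]⟩,
    ⟨|n|, fun j hj a => by simp only [shiftAmount_of_abs_le hj]⟩⟩
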